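/- arXiv:2210.10989 — 3 statements merged into one kernel-verified Lean document; each statement's English description precedes it below -/
import Mathlib

section
/- Let φ(s) = (s²/(2(s - log(1+s))))^{1/2} as a formal power series with φ(0)=1. Then for all integers m ≥ 0 with m ≠ 1, the coefficient of s^{m−1} in φ(s)^{m+1}/(1+s) equals 0 (for m=0 interpret the coefficient of s^{−1} as 0). -/
/-!
Differentiating `φ² · 2(s − log(1+s)) = s²` and using `(1+s) · log'(1+s) = 1` gives the
differential equation `s(1+s)φ' + φ³ = (1+s)φ`. Multiplying it by `φ^k/(1+s)` yields
`s · φ^k φ' + φ^(k+3)/(1+s) = φ^(k+1)`, and `φ^k φ' = (φ^(k+1))'/(k+1)` has the same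
coefficient of `s^k` as `φ^(k+1)` has of `s^(k+1)`. Comparing coefficients of `s^(k+1)`
kills the coefficient of `s^(k+1)` in `φ^(k+3)/(1+s)`, which is the case `m = k+2`.
-/

open PowerSeries

/-- The formal power series `log(1+s) = ∑_{k≥1} (-1)^(k-1) s^k / k` over `ℚ`. -/
noncomputable def logOneAdd : ℚ⟦X⟧ :=
  PowerSeries.mk fun k => if k = 0 then 0 else (-1) ^ (k - 1) / (k : ℚ)

lemma one_add_X_mul_derivative_logOneAdd : (1 + X) * d⁄dX ℚ logOneAdd = 1 := by
  ext n
  rw [add_mul, one_mul, map_add]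
  cases n with
  | zero => simp [coeff_derivative, logOneAdd]
  | succ n =>
    rw [coeff_succ_X_mul, coeff_derivative, coeff_derivative, coeff_one]
    simp only [logOneAdd, coeff_mk, Nat.succ_ne_zero, if_false]
    push_cast
    field_simp
    ring

lemma X_mul_one_add_X_mul_derivative_add_pow_three {φ : ℚ⟦X⟧}
    (hφ : φ ^ 2 * (2 * (X - logOneAdd)) = X ^ 2) :
    X * (1 + X) * d⁄dX ℚ φ + φ ^ 3 = (1 + X) * φ := by
  have hd := congrArg (d⁄dX ℚ) hφ
  have h2 : d⁄dX ℚ (2 : ℚ⟦X⟧) = 0 := by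
    rw [← map_ofNat (C (R := ℚ)) 2, derivative_C]
  rw [Derivation.leibniz, Derivation.leibniz, Derivation.leibniz_pow, Derivation.leibniz_pow,
    map_sub, derivative_X, h2] at hd
  simp only [smul_eq_mul, nsmul_eq_mul, Nat.cast_ofNat, mul_one, mul_zero, add_zero] at hd
  have h2X : (2 : ℚ⟦X⟧) * X ≠ 0 :=
    mul_ne_zero (fun h => two_ne_zero (by simpa [map_ofNat] using congrArg constantCoeff h))
      X_ne_zero
  -- `(1+s)φ · hφ'`, reduced by `hφ` and `(1+s)log' = 1`, is `2s` times the goal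
  refine mul_left_cancel₀ h2X ?_
  linear_combination ((1 + X) * φ) * hd - (2 * (1 + X) * (d⁄dX ℚ φ)) * hφ +
    (2 * φ ^ 3) * one_add_X_mul_derivative_logOneAdd

lemma coeff_pow_mul_derivative {R : Type*} [CommRing R] [IsDomain R] [CharZero R]
    (f : R⟦X⟧) (k : ℕ) :
    coeff k (f ^ k * d⁄dX R f) = coeff (k + 1) (f ^ (k + 1)) := by
  have h := congrArg (coeff k) (Derivation.leibniz_pow (d⁄dX R) f (k + 1))
  rw [coeff_derivative, Nat.add_sub_cancel, map_nsmul, smul_eq_mul, nsmul_eq_mul] at h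
  push_cast at h
  exact mul_left_cancel₀ (Nat.cast_add_one_ne_zero k) (by linear_combination -h)

theorem stmt1_general (φ : ℚ⟦X⟧)
    (hφ : φ ^ 2 * (2 * (X - logOneAdd)) = X ^ 2)
    (m : ℕ) (hm : m ≠ 1) :
    coeff m (X * (φ ^ (m + 1) * (1 + X)⁻¹)) = 0 := by
  obtain _ | _ | k := m
  · simp
  · exact absurd rfl hm
  have hinv : (1 + X) * (1 + X)⁻¹ = (1 : ℚ⟦X⟧) := PowerSeries.mul_inv_cancel _ (by simp)
  have hode : X * (φ ^ k * d⁄dX ℚ φ) + φ ^ (k + 3) * (1 + X)⁻¹ = φ ^ (k + 1) := by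
    linear_combination (φ ^ k * (1 + X)⁻¹) * X_mul_one_add_X_mul_derivative_add_pow_three hφ
      - (X * φ ^ k * d⁄dX ℚ φ - φ ^ (k + 1)) * hinv
  have hcoeff := congrArg (coeff (k + 1)) hode
  rw [map_add, coeff_succ_X_mul, coeff_pow_mul_derivative, add_eq_left] at hcoeff
  rw [coeff_succ_X_mul]
  exact hcoeff

/-- If `φ` is the formal power series square root (with constant term 1) of
`s²/(2(s − log(1+s)))`, then for `m ≠ 1` the coefficient of `s^(m-1)` in
`φ(s)^(m+1)/(1+s)` vanishes.  The coefficient of `s^(m-1)` is expressed as the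
coefficient of `s^m` in `s · φ(s)^(m+1)/(1+s)`, which realizes the convention
that the coefficient of `s^(-1)` (case `m = 0`) is `0`. -/
theorem stmt1 (φ : ℚ⟦X⟧) (hφ0 : constantCoeff φ = 1)
    (hφ : φ ^ 2 * (2 * (X - logOneAdd)) = X ^ 2)
    (m : ℕ) (hm : m ≠ 1) :
    coeff m (X * (φ ^ (m + 1) * (1 + X)⁻¹)) = 0 :=
  stmt1_general φ hφ m hm
end

section
/- Define g_m = [t^m] ((t²/2)/(e^t − 1 − t))^{(m+1)/2} and h_m = [s^m] ((s²/2)/(s − log(1+s)))^{(m+1)/2}, where the square roots are the formal power series with constant term 1. Then g_m = h_m for all m ≥ 0 with m ≠ 1. -/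
open PowerSeries

/-- The formal power series `(t²/2)/(eᵗ − 1 − t) = (∑_{j≥0} 2 t^j/(j+2)!)⁻¹` over `ℚ`,
with constant term 1. -/
noncomputable def ratioG : ℚ⟦X⟧ :=
  (PowerSeries.mk fun j => 2 / ((j + 2).factorial : ℚ))⁻¹

/-- The formal power series `(s²/2)/(s − log(1+s)) = (∑_{j≥0} 2(-1)^j s^j/(j+2))⁻¹`
over `ℚ`, with constant term 1. -/
noncomputable def ratioH : ℚ⟦X⟧ :=
  (PowerSeries.mk fun j => 2 * (-1) ^ j / ((j : ℚ) + 2))⁻¹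

/-!
Put `φ = eᵗ - 1 = t·E` with `E(0) = 1`. Since `log(1 + φ) = t`, substituting `s = φ` turns
`(s²/2)/(s - log(1+s))` into `E² · (t²/2)/(eᵗ - 1 - t)`, hence `H(φ) = G·E^(m+1)`. The residue
change of variables `[sᵐ] H = [tᵐ] E^-(m+1) φ' H(φ)` then gives
`[sᵐ] H = [tᵐ] G eᵗ = [tᵐ] G + [tᵐ] G φ`. Finally, differentiating `G² C^(m+1) = 1` and
`t² C = 2(φ - t)`, where `C = 2(eᵗ - 1 - t)/t²`, writes `(m - 1)·Gφ` as a combination of `t·GC`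
and `t²·(GC)'` whose `tᵐ`-coefficients cancel, so `[tᵐ] G φ = 0` for `m ≠ 1`.
-/

open Finset

namespace PowerSeries

section CommRing

variable {R : Type*} [CommRing R]

theorem coeff_X_mul_derivative (f : R⟦X⟧) (n : ℕ) :
    coeff n (X * d⁄dX R f) = n * coeff n f := by
  rcases n with _ | n
  · simp
  · rw [coeff_succ_X_mul, coeff_derivative]; push_cast; ring

theorem coeff_X_sq_mul_derivative (f : R⟦X⟧) (n : ℕ) :
    coeff n (X ^ 2 * d⁄dX R f) = ((n : R) - 1) * coeff n (X * f) := by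
  rcases n with _ | n
  · simp
  · rw [pow_two, mul_assoc, coeff_succ_X_mul, coeff_succ_X_mul, coeff_X_mul_derivative]
    push_cast; ring

theorem coeff_mul_subst_eq_sum {φ : R⟦X⟧} (hφ : constantCoeff φ = 0) (F H : R⟦X⟧) (n : ℕ) :
    coeff n (F * H.subst φ) = ∑ i ∈ range (n + 1), coeff i H * coeff n (F * φ ^ i) := by
  have hsub : HasSubst φ := HasSubst.of_constantCoeff_zero' hφ
  set T := mk fun i ↦ coeff (i + (n + 1)) H
  have hsplit : H.subst φ = φ ^ (n + 1) * T.subst φ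
      + ∑ i ∈ range (n + 1), coeff i H • φ ^ i := by
    conv_lhs => rw [eq_X_pow_mul_shift_add_trunc (n + 1) H]
    rw [subst_add hsub, subst_mul hsub, subst_pow hsub, subst_X hsub, subst_coe hsub,
      Polynomial.aeval_eq_sum_range' (natDegree_trunc_lt H n)]
    simp only [coeff_trunc]
    congr 1
    exact sum_congr rfl fun i hi ↦ by rw [if_pos (mem_range.mp hi)]
  have htail : coeff n (F * (φ ^ (n + 1) * T.subst φ)) = 0 := by
    have hdvd : X ^ (n + 1) ∣ F * (φ ^ (n + 1) * T.subst φ) :=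
      Dvd.dvd.mul_left ((pow_dvd_pow_of_dvd (X_dvd_iff.mpr hφ) _).mul_right _) _
    exact X_pow_dvd_iff.mp hdvd n (Nat.lt_succ_self n)
  rw [hsplit, mul_add, map_add, htail, zero_add, mul_sum, map_sum]
  exact sum_congr rfl fun i _ ↦ by rw [mul_smul_comm, coeff_smul, smul_eq_mul]

theorem constantCoeff_subst_of_constantCoeff_eq_zero {φ : R⟦X⟧} (hφ : constantCoeff φ = 0)
    (H : R⟦X⟧) : constantCoeff (H.subst φ) = constantCoeff H := by
  simpa using coeff_mul_subst_eq_sum hφ 1 H 0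

theorem mul_derivative_add_of_sq_mul_pow_eq_one {G C : R⟦X⟧} {n : ℕ}
    (h : G ^ 2 * C ^ (n + 1) = 1) :
    ((n : R⟦X⟧) + 1) * G * d⁄dX R C + 2 * C * d⁄dX R G = 0 := by
  have hd := congrArg (d⁄dX R) h
  simp only [Derivation.leibniz, Derivation.leibniz_pow, smul_eq_mul, nsmul_eq_mul,
    Derivation.map_one_eq_zero] at hd
  push_cast at hd
  linear_combination (G * C) * hd - (((n : R⟦X⟧) + 1) * G * d⁄dX R C + 2 * C * d⁄dX R G) * h

end CommRing

theorem eq_of_sq_eq_sq_of_constantCoeff_eq {R : Type*} [CommRing R] [IsDomain R] [NeZero (2 : R)]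
    {A B : R⟦X⟧} (h : A ^ 2 = B ^ 2) (h0 : constantCoeff A = constantCoeff B)
    (hB : constantCoeff B ≠ 0) : A = B := by
  refine (sq_eq_sq_iff_eq_or_eq_neg.mp h).resolve_right fun hneg ↦ hB ?_
  rw [hneg, map_neg, neg_eq_iff_add_eq_zero, ← two_mul] at h0
  exact (mul_eq_zero.mp h0).resolve_left two_ne_zero

theorem log_subst_exp_sub_one {A : Type*} [CommRing A] [Algebra ℚ A] [IsAddTorsionFree A] :
    (log A).subst (exp A - 1) = X := by
  have hsub : HasSubst (exp A - 1) := HasSubst.exp_sub_one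
  refine derivative.ext ?_ ?_
  · have hgeom : (mk fun n ↦ algebraMap ℚ A ((-1) ^ n)) * (1 + X) = 1 := by
      ext (_ | n) <;> simp [mul_add, coeff_succ_mul_X, pow_succ]
    have h := congrArg (substAlgHom hsub) hgeom
    rw [map_mul, map_add, map_one, substAlgHom_X, coe_substAlgHom, add_sub_cancel] at h
    rw [derivative_subst hsub, deriv_log, map_sub, derivative_exp, derivative_X]
    simpa using h
  · rw [constantCoeff_subst_of_constantCoeff_eq_zero (by simp)]
    simp

section Field

variable {K : Type*} [Field K] [CharZero K] {E : K⟦X⟧}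

theorem coeff_inv_pow_succ_mul_derivative_X_mul (hE : constantCoeff E ≠ 0) (r : ℕ) :
    coeff r (E⁻¹ ^ (r + 1) * d⁄dX K (X * E)) = if r = 0 then 1 else 0 := by
  rcases r with _ | r
  · simp [hE]
  · -- `(r+1)·E^-(r+2)·(XE)' = (r+1)·U - X·U'` for `U = E^-(r+1)`; the right side has no `X^(r+1)`
    have hEE : E⁻¹ * E = 1 := PowerSeries.inv_mul_cancel E hE
    set U := E⁻¹ ^ (r + 1)
    have hU : ((r : K⟦X⟧) + 1) * (E⁻¹ ^ (r + 2) * d⁄dX K (X * E)) =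
        ((r : K⟦X⟧) + 1) * U - X * d⁄dX K U := by
      simp only [U, derivative_pow, derivative_inv', Derivation.leibniz, derivative_X,
        smul_eq_mul]
      push_cast
      linear_combination ((r : K⟦X⟧) + 1) * E⁻¹ ^ (r + 1) * hEE
    have hc := congrArg (coeff (r + 1)) hU
    rw [map_sub, coeff_X_mul_derivative, ← map_natCast (C (R := K)), ← map_one (C (R := K)),
      ← map_add, coeff_C_mul, coeff_C_mul] at hc
    push_cast at hc
    simpa [Nat.cast_add_one_ne_zero] using hc

theorem coeff_inv_pow_mul_derivative_mul_pow (hE : constantCoeff E ≠ 0) {k m : ℕ} (hk : k ≤ m) :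
    coeff m (E⁻¹ ^ (m + 1) * d⁄dX K (X * E) * (X * E) ^ k) = if k = m then 1 else 0 := by
  obtain ⟨r, rfl⟩ := Nat.exists_eq_add_of_le hk
  have hEk : E⁻¹ ^ k * E ^ k = 1 := by rw [← mul_pow, PowerSeries.inv_mul_cancel E hE, one_pow]
  have hsplit : E⁻¹ ^ (k + r + 1) * d⁄dX K (X * E) * (X * E) ^ k
      = X ^ k * (E⁻¹ ^ (r + 1) * d⁄dX K (X * E)) := by
    rw [show k + r + 1 = r + 1 + k by omega, pow_add, mul_pow]
    linear_combination (X ^ k * E⁻¹ ^ (r + 1) * d⁄dX K (X * E)) * hEk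
  rw [hsplit, add_comm k r, coeff_X_pow_mul, coeff_inv_pow_succ_mul_derivative_X_mul hE]
  simp

/-- Change of variables `s = X * E` in the residue `[sᵐ] H = res H(s) / s^(m+1) ds`. -/
theorem coeff_eq_coeff_mul_subst_X_mul (hE : constantCoeff E ≠ 0) (H : K⟦X⟧) (m : ℕ) :
    coeff m H = coeff m (E⁻¹ ^ (m + 1) * d⁄dX K (X * E) * H.subst (X * E)) := by
  rw [coeff_mul_subst_eq_sum (by simp), sum_eq_single_of_mem m (self_mem_range_succ m)]
  · rw [coeff_inv_pow_mul_derivative_mul_pow hE le_rfl, if_pos rfl, mul_one]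
  · intro k hk hkm
    rw [coeff_inv_pow_mul_derivative_mul_pow hE (Nat.lt_succ_iff.mp (mem_range.mp hk)),
      if_neg hkm, mul_zero]

end Field

end PowerSeries

noncomputable def expSubOneDivX : ℚ⟦X⟧ := mk fun n ↦ coeff (n + 1) (exp ℚ)

theorem X_mul_expSubOneDivX : X * expSubOneDivX = exp ℚ - 1 := by
  ext (_ | n) <;> simp [expSubOneDivX, coeff_exp]

theorem constantCoeff_expSubOneDivX : constantCoeff expSubOneDivX = 1 := by
  simp [expSubOneDivX, coeff_exp]

noncomputable def invRatioG : ℚ⟦X⟧ := mk fun j ↦ 2 / ((j + 2).factorial : ℚ)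

noncomputable def invRatioH : ℚ⟦X⟧ := mk fun j ↦ 2 * (-1) ^ j / ((j : ℚ) + 2)

theorem ratioG_mul_invRatioG : ratioG * invRatioG = 1 :=
  PowerSeries.inv_mul_cancel _ (by simp)

theorem ratioH_mul_invRatioH : ratioH * invRatioH = 1 :=
  PowerSeries.inv_mul_cancel _ (by simp)

theorem X_sq_mul_invRatioG : X ^ 2 * invRatioG = 2 * (exp ℚ - 1 - X) := by
  ext (_ | _ | n) <;>
    simp [← map_ofNat C 2, coeff_X_pow_mul', coeff_exp, invRatioG, coeff_X, div_eq_mul_inv]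

theorem X_sq_mul_invRatioH : X ^ 2 * invRatioH = 2 * (X - log ℚ) := by
  ext (_ | _ | n) <;> simp [← map_ofNat C 2, coeff_X_pow_mul', invRatioH, coeff_X]
  ring

theorem invRatioH_subst_mul_sq :
    invRatioH.subst (exp ℚ - 1) * expSubOneDivX ^ 2 = invRatioG := by
  have hsub : HasSubst (exp ℚ - 1) := HasSubst.exp_sub_one
  have h := congrArg (substAlgHom hsub) X_sq_mul_invRatioH
  rw [map_mul, map_mul, map_pow, map_sub, map_ofNat, substAlgHom_X, coe_substAlgHom,
    log_subst_exp_sub_one, ← X_sq_mul_invRatioG] at h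
  rw [← X_mul_expSubOneDivX] at h ⊢
  refine mul_left_cancel₀ (pow_ne_zero 2 X_ne_zero) ?_
  linear_combination h

theorem ratioH_subst : ratioH.subst (exp ℚ - 1) = ratioG * expSubOneDivX ^ 2 := by
  have hsub : HasSubst (exp ℚ - 1) := HasSubst.exp_sub_one
  have hleft : ratioH.subst (exp ℚ - 1) * invRatioH.subst (exp ℚ - 1) = 1 := by
    rw [← subst_mul hsub, ratioH_mul_invRatioH, ← coe_substAlgHom hsub, map_one]
  have hright : invRatioH.subst (exp ℚ - 1) * (ratioG * expSubOneDivX ^ 2) = 1 := by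
    rw [mul_left_comm, invRatioH_subst_mul_sq, ratioG_mul_invRatioG]
  exact left_inv_eq_right_inv hleft hright

theorem coeff_mul_exp_sub_one_eq_zero {m : ℕ} (hm : m ≠ 1) {G : ℚ⟦X⟧}
    (hG : G ^ 2 * invRatioG ^ (m + 1) = 1) : coeff m (G * (exp ℚ - 1)) = 0 := by
  have hC : 2 * X * invRatioG + X ^ 2 * d⁄dX ℚ invRatioG = 2 * (exp ℚ - 1) := by
    have h := congrArg (d⁄dX ℚ) X_sq_mul_invRatioG
    have h2 : d⁄dX ℚ (2 : ℚ⟦X⟧) = 0 := by rw [← map_ofNat C 2, derivative_C]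
    simp only [Derivation.leibniz, derivative_pow, derivative_X, smul_eq_mul, map_sub,
      derivative_exp, Derivation.map_one_eq_zero, h2] at h
    push_cast at h
    linear_combination h
  have hlog := mul_derivative_add_of_sq_mul_pow_eq_one hG
  have key : ((m : ℚ⟦X⟧) - 1) * (2 * (G * (exp ℚ - 1))) =
      2 * (((m : ℚ⟦X⟧) - 1) * (X * (G * invRatioG)) - X ^ 2 * d⁄dX ℚ (G * invRatioG)) := by
    rw [Derivation.leibniz, smul_eq_mul, smul_eq_mul]
    linear_combination (1 - (m : ℚ⟦X⟧)) * G * hC + X ^ 2 * hlog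
  have hc := congrArg (coeff m) key
  rw [show (m : ℚ⟦X⟧) - 1 = C ((m : ℚ) - 1) by simp, ← map_ofNat C 2, coeff_C_mul, coeff_C_mul,
    coeff_C_mul, map_sub, coeff_C_mul, coeff_X_sq_mul_derivative, sub_self, mul_zero] at hc
  have hm' : (m : ℚ) - 1 ≠ 0 := sub_ne_zero.mpr (Nat.cast_ne_one.mpr hm)
  simpa [hm'] using hc

theorem subst_exp_sub_one_eq_mul_pow {m : ℕ} {G H : ℚ⟦X⟧}
    (hG0 : constantCoeff G = 1) (hG : G ^ 2 = ratioG ^ (m + 1))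
    (hH0 : constantCoeff H = 1) (hH : H ^ 2 = ratioH ^ (m + 1)) :
    H.subst (exp ℚ - 1) = G * expSubOneDivX ^ (m + 1) := by
  have hsub : HasSubst (exp ℚ - 1) := HasSubst.exp_sub_one
  refine eq_of_sq_eq_sq_of_constantCoeff_eq ?_ ?_ (by simp [hG0, constantCoeff_expSubOneDivX])
  · rw [← subst_pow hsub, hH, subst_pow hsub, ratioH_subst, mul_pow, mul_pow, ← hG, ← pow_mul,
      ← pow_mul, mul_comm 2]
  · rw [constantCoeff_subst_of_constantCoeff_eq_zero (by simp)]
    simp [hH0, hG0, constantCoeff_expSubOneDivX]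

/-- With `G = ((t²/2)/(eᵗ−1−t))^((m+1)/2)` and `H = ((s²/2)/(s−log(1+s)))^((m+1)/2)`
(the square roots with constant term 1), we have `[t^m] G = [s^m] H` for `m ≠ 1`. -/
theorem stmt2 (m : ℕ) (hm : m ≠ 1) (G H : ℚ⟦X⟧)
    (hG0 : constantCoeff G = 1) (hG : G ^ 2 = ratioG ^ (m + 1))
    (hH0 : constantCoeff H = 1) (hH : H ^ 2 = ratioH ^ (m + 1)) :
    coeff m G = coeff m H := by
  have hE : constantCoeff expSubOneDivX ≠ 0 := by simp [constantCoeff_expSubOneDivX]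
  have hEinv : expSubOneDivX⁻¹ ^ (m + 1) * expSubOneDivX ^ (m + 1) = 1 := by
    rw [← mul_pow, PowerSeries.inv_mul_cancel _ hE, one_pow]
  have hGC : G ^ 2 * invRatioG ^ (m + 1) = 1 := by
    rw [hG, ← mul_pow, ratioG_mul_invRatioG, one_pow]
  symm
  calc coeff m H
      = coeff m (expSubOneDivX⁻¹ ^ (m + 1) * d⁄dX ℚ (X * expSubOneDivX)
          * H.subst (X * expSubOneDivX)) := coeff_eq_coeff_mul_subst_X_mul hE H m
    _ = coeff m (G * d⁄dX ℚ (exp ℚ - 1)) := by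
      rw [X_mul_expSubOneDivX, subst_exp_sub_one_eq_mul_pow hG0 hG hH0 hH]
      congr 1
      linear_combination (G * d⁄dX ℚ (exp ℚ - 1)) * hEinv
    _ = coeff m G + coeff m (G * (exp ℚ - 1)) := by
      rw [map_sub, derivative_exp, Derivation.map_one_eq_zero, sub_zero, ← map_add]
      congr 1
      ring
    _ = coeff m G := by rw [coeff_mul_exp_sub_one_eq_zero hm hGC, add_zero]
end

section
/- Define h_m = [v^m] (v²/(4·log((1+v/2)²/(1+v))))^{(m+1)/2} with the square root normalized to have constant term 1. Then for every m ≥ 0, h_{2m} = 4^{−m} · [y^m] (2e^y − 1)·(y/(1 − e^{−y}))^{1/2}, where the square root has constant term 1. -/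
open PowerSeries

/-- `4·log((1+v/2)²/(1+v)) = ∑_{k≥1} 4(−1)^(k−1)(2·(1/2)^k − 1) v^k/k`,
a power series with lowest term `v²·(1 + O(v))`. -/
noncomputable def denomLog : ℚ⟦X⟧ :=
  PowerSeries.mk fun k =>
    if k = 0 then 0 else 4 * (-1) ^ (k - 1) * (2 * (1 / 2 : ℚ) ^ k - 1) / k

/-- `(1−e^{−t})/t = ∑_{k≥0} (−1)^k t^k/(k+1)!`, with constant term 1;
its inverse is `t/(1−e^{−t})`. -/
noncomputable def ratioB : ℚ⟦X⟧ :=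
  PowerSeries.mk fun k => (-1) ^ k / ((k + 1).factorial : ℚ)

/-!
Write `denomLog = f²` with `f = X * t`, `t(0) = 1`. Then `H = t⁻¹ ^ (2m+1)`, and Lagrange
inversion gives `[v^n] t⁻¹ ^ (n+1) = [y^n] G` for every `G` with `G(f(v)) · f'(v) = 1`, i.e. for
`G = g'` where `g` is the compositional inverse of `f`. Putting `y = f(v)`, so that
`y²/4 = log((1+v/2)²/(1+v))`, one has `e^{y²/4} = (1+v/2)²/(1+v)` and
`(y²/4)/(1 - e^{-y²/4}) = ((1+v/2) t)²`; this makes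
`G(y) = y e^{y²/4} + (2e^{y²/4} - 1) w(y²/4)` work. The first summand is odd in `y`, and the
second one, being a series in `y²/4`, has `[y^{2m}] = 4^{-m} [y^m] (2e^y - 1) w(y)`.
-/

namespace PowerSeries

instance {R : Type*} [Semiring R] [CharZero R] : CharZero R⟦X⟧ :=
  charZero_of_injective_ringHom C_injective

section CommRing

variable {R : Type*} [CommRing R]

theorem constantCoeff_subst_of_constantCoeff_eq_zero_s17 {a : R⟦X⟧} (ha : constantCoeff a = 0)
    (f : R⟦X⟧) : constantCoeff (f.subst a) = constantCoeff f := by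
  rw [← coeff_zero_eq_constantCoeff_apply, coeff_subst' (HasSubst.of_constantCoeff_zero' ha),
    finsum_eq_single _ 0]
  · simp
  · intro d hd
    simp [ha, zero_pow hd]

theorem coeff_subst_mul {a : R⟦X⟧} (ha : constantCoeff a = 0) (f g : R⟦X⟧) (n : ℕ) :
    coeff n (f.subst a * g) = ∑ j ∈ Finset.range (n + 1), coeff j f * coeff n (a ^ j * g) := by
  have hsub : HasSubst a := HasSubst.of_constantCoeff_zero' ha
  set p : R⟦X⟧ := ↑(trunc (n + 1) f)
  obtain ⟨r, hr⟩ : X ^ (n + 1) ∣ f - p := by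
    rw [X_pow_dvd_iff]
    intro i hi
    simp [p, coeff_trunc, hi]
  have htail : coeff n ((f - p).subst a * g) = 0 := by
    have : (X : R⟦X⟧) ^ (n + 1) ∣ (f - p).subst a * g := by
      rw [hr, subst_mul hsub, subst_pow hsub, subst_X hsub, mul_assoc]
      exact (pow_dvd_pow_of_dvd (X_dvd_iff.mpr ha) _).mul_right _
    exact X_pow_dvd_iff.mp this n (Nat.lt_succ_self n)
  have hsplit : f.subst a = p.subst a + (f - p).subst a := by
    rw [← subst_add hsub, add_sub_cancel]
  rw [hsplit, add_mul, map_add, htail, add_zero, subst_coe hsub,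
    Polynomial.aeval_eq_sum_range' (natDegree_trunc_lt f n), Finset.sum_mul, map_sum]
  refine Finset.sum_congr rfl fun j hj => ?_
  rw [coeff_trunc, if_pos (Finset.mem_range.mp hj), smul_mul_assoc, coeff_smul, smul_eq_mul]

theorem coeff_subst_C_mul_X_sq (c : R) (f : R⟦X⟧) (n : ℕ) :
    coeff n (f.subst (C c * X ^ 2 : R⟦X⟧)) =
      if 2 ∣ n then c ^ (n / 2) * coeff (n / 2) f else 0 := by
  have h : f.subst (C c * X ^ 2 : R⟦X⟧) = (rescale c f).subst (X ^ 2 : R⟦X⟧) := by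
    rw [rescale_eq_subst, subst_comp_subst_apply (HasSubst.smul_X' c) (HasSubst.X_pow two_ne_zero),
      subst_smul (HasSubst.X_pow two_ne_zero), subst_X (HasSubst.X_pow two_ne_zero), smul_eq_C_mul]
  rw [h, coeff_subst_X_pow two_ne_zero, coeff_rescale]
  rfl

theorem mk_pow_mul_one_sub_C_mul_X (c : R) : mk (c ^ ·) * (1 - C c * X) = 1 := by
  simpa [rescale_mk] using congrArg (rescale c) (mk_one_mul_one_sub_eq_one (S := R))

theorem exists_sq_eq_of_constantCoeff_eq_one [Algebra ℚ R] {u : R⟦X⟧}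
    (hu : constantCoeff u = 1) : ∃ s : R⟦X⟧, s ^ 2 = u ∧ constantCoeff s = 1 := by
  have hu' : constantCoeff (u - 1) = 0 := by simp [hu]
  have hsub : HasSubst (u - 1) := HasSubst.of_constantCoeff_zero' hu'
  refine ⟨(binomialSeries R (2⁻¹ : ℚ)).subst (u - 1), ?_, ?_⟩
  · have h := binomialSeries_nat (R := ℚ) (A := R) 1
    rw [Nat.cast_one, pow_one, ← add_halves (1 : ℚ), binomialSeries_add] at h
    rw [← subst_pow hsub, sq, ← coe_substAlgHom hsub, ← one_div, h, map_add, map_one,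
      substAlgHom_X, add_sub_cancel]
  · rw [constantCoeff_subst_of_constantCoeff_eq_zero_s17 hu', binomialSeries_constantCoeff]

theorem eq_of_sq_eq_sq_of_constantCoeff_eq_s17 [IsDomain R] [CharZero R] {s t : R⟦X⟧}
    (h : s ^ 2 = t ^ 2) (h0 : constantCoeff s = constantCoeff t) (hs : constantCoeff s ≠ 0) :
    s = t := by
  rcases sq_eq_sq_iff_eq_or_eq_neg.mp h with h | h
  · exact h
  · rw [h, map_neg, neg_eq_iff_add_eq_zero, ← two_mul] at h0
    simp_all

end CommRing

variable {K : Type*} [Field K] [CharZero K]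

theorem eq_of_derivative_mul_eq_mul_derivative {y z : K⟦X⟧}
    (hyz : d⁄dX K y * z = y * d⁄dX K z) (hz : constantCoeff z ≠ 0)
    (h0 : constantCoeff y = constantCoeff z) : y = z := by
  have hinv : z⁻¹ * z = 1 := PowerSeries.inv_mul_cancel z hz
  have hquot : y * z⁻¹ = 1 := by
    refine derivative.ext ?_ (by simp [h0, hz])
    rw [Derivation.leibniz, derivative_inv', Derivation.map_one_eq_zero, smul_eq_mul, smul_eq_mul]
    linear_combination z⁻¹ ^ 2 * hyz - z⁻¹ * d⁄dX K y * hinv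
  linear_combination z * hquot - y * hinv

theorem coeff_inv_pow_succ_mul_derivative {t : K⟦X⟧} (ht : constantCoeff t ≠ 0) (k : ℕ) :
    coeff k (t⁻¹ ^ (k + 1) * d⁄dX K (X * t)) = if k = 0 then 1 else 0 := by
  have hinv : t⁻¹ * t = 1 := PowerSeries.inv_mul_cancel t ht
  cases k with
  | zero => simp [ht]
  | succ k =>
    have key : ((k + 1 : ℕ) : K⟦X⟧) * (t⁻¹ ^ (k + 2) * d⁄dX K (X * t)) =
        ((k + 1 : ℕ) : K⟦X⟧) * t⁻¹ ^ (k + 1) - X * d⁄dX K (t⁻¹ ^ (k + 1)) := by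
      rw [derivative_pow, derivative_inv', Derivation.leibniz, derivative_X, Nat.add_sub_cancel]
      simp only [smul_eq_mul]
      linear_combination ((k + 1 : ℕ) : K⟦X⟧) * t⁻¹ ^ (k + 1) * hinv
    have hcoeff := congrArg (coeff (k + 1)) key
    rw [map_sub, coeff_succ_X_mul, coeff_derivative, ← map_natCast (C (R := K)), coeff_C_mul,
      coeff_C_mul, Nat.cast_add_one, mul_comm _ ((k : K) + 1), sub_self, mul_eq_zero] at hcoeff
    simpa [Nat.cast_add_one_ne_zero] using hcoeff

/-- Lagrange inversion: `G` is the derivative of the compositional inverse of `X * t`. -/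
theorem coeff_inv_pow_succ_eq_coeff_of_subst_mul_derivative_eq_one {t G : K⟦X⟧}
    (ht : constantCoeff t ≠ 0) (hG : G.subst (X * t) * d⁄dX K (X * t) = 1) (n : ℕ) :
    coeff n (t⁻¹ ^ (n + 1)) = coeff n G := by
  have hinv : t⁻¹ * t = 1 := PowerSeries.inv_mul_cancel t ht
  have hXt : constantCoeff (X * t) = 0 := by simp
  calc coeff n (t⁻¹ ^ (n + 1))
      = coeff n (G.subst (X * t) * (d⁄dX K (X * t) * t⁻¹ ^ (n + 1))) := by
        rw [← mul_assoc, hG, one_mul]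
    _ = ∑ j ∈ Finset.range (n + 1), coeff j G * if j = n then 1 else 0 := by
        rw [coeff_subst_mul hXt]
        refine Finset.sum_congr rfl fun j hj => ?_
        obtain ⟨i, rfl⟩ := Nat.exists_eq_add_of_le (Nat.lt_succ_iff.mp (Finset.mem_range.mp hj))
        have hsplit : (X * t) ^ j * (d⁄dX K (X * t) * t⁻¹ ^ (j + i + 1)) =
            X ^ j * (t⁻¹ ^ (i + 1) * d⁄dX K (X * t)) := by
          calc _ = X ^ j * (t⁻¹ ^ (i + 1) * d⁄dX K (X * t)) * (t⁻¹ * t) ^ j := by ring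
            _ = _ := by rw [hinv, one_pow, mul_one]
        rw [hsplit, coeff_X_pow_mul', if_pos (Nat.le_add_right j i), Nat.add_sub_cancel_left,
          coeff_inv_pow_succ_mul_derivative ht]
        simp
    _ = coeff n G := by simp

end PowerSeries

theorem derivative_denomLog :
    d⁄dX ℚ denomLog = 4 * (mk ((-2⁻¹ : ℚ) ^ ·) - mk ((-1 : ℚ) ^ ·)) := by
  ext k
  rw [coeff_derivative, denomLog, coeff_mk, if_neg k.succ_ne_zero, Nat.add_sub_cancel,
    ← map_ofNat C 4, coeff_C_mul, map_sub, coeff_mk, coeff_mk,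
    show (-2⁻¹ : ℚ) ^ k = (-1) ^ k * (1 / 2) ^ k by rw [← mul_pow]; norm_num]
  field_simp
  push_cast
  ring

theorem derivative_denomLog_mul : d⁄dX ℚ denomLog * ((2 + X) * (1 + X)) = 4 * X := by
  have ha := mk_pow_mul_one_sub_C_mul_X (-2⁻¹ : ℚ)
  have hb := mk_pow_mul_one_sub_C_mul_X (-1 : ℚ)
  have hc2 : 2 * C (-2⁻¹ : ℚ) = -1 := by rw [← map_ofNat C 2, ← map_mul]; norm_num
  have hc1 : C (-1 : ℚ) = -1 := by simp
  rw [derivative_denomLog]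
  linear_combination 4 * (1 + X) * (2 * ha + mk ((-2⁻¹ : ℚ) ^ ·) * X * hc2)
    - 4 * (2 + X) * (hb + mk ((-1 : ℚ) ^ ·) * X * hc1)

theorem exists_X_mul_sq_eq_denomLog :
    ∃ t : ℚ⟦X⟧, (X * t) ^ 2 = denomLog ∧ constantCoeff t = 1 := by
  obtain ⟨u, hu⟩ : X ^ 2 ∣ denomLog := by
    rw [X_pow_dvd_iff]
    intro i hi
    interval_cases i <;> simp [denomLog]
  have hu0 : constantCoeff u = 1 := by
    have h := congrArg (coeff 2) hu
    rw [coeff_X_pow_mul', if_pos le_rfl, Nat.sub_self, coeff_zero_eq_constantCoeff] at h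
    rw [← h, denomLog, coeff_mk]
    norm_num
  obtain ⟨t, ht, ht0⟩ := exists_sq_eq_of_constantCoeff_eq_one hu0
  exact ⟨t, by rw [mul_pow, ht, hu], ht0⟩

/-- `log((1 + X/2)² / (1 + X))` -/
noncomputable def logRatio : ℚ⟦X⟧ := C 4⁻¹ * denomLog

theorem constantCoeff_logRatio : constantCoeff logRatio = 0 := by
  simp [logRatio, denomLog, ← coeff_zero_eq_constantCoeff_apply]

theorem derivative_logRatio_mul : d⁄dX ℚ logRatio * ((2 + X) * (1 + X)) = X := by
  have h4 : C (4⁻¹ : ℚ) * 4 = 1 := by rw [← map_ofNat C 4, ← map_mul]; norm_num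
  rw [logRatio, Derivation.leibniz, derivative_C, smul_zero, add_zero, smul_eq_mul]
  linear_combination C (4⁻¹ : ℚ) * derivative_denomLog_mul + X * h4

theorem exp_subst_logRatio_mul : (exp ℚ).subst logRatio * (4 * (1 + X)) = (2 + X) ^ 2 := by
  have hsub := HasSubst.of_constantCoeff_zero' constantCoeff_logRatio
  set P : ℚ⟦X⟧ := (exp ℚ).subst logRatio
  have hP : d⁄dX ℚ P = P * d⁄dX ℚ logRatio := by
    rw [derivative_subst hsub, derivative_exp]
  -- both sides solve `Y' * (2 + X) = 2 * Y`
  apply eq_of_derivative_mul_eq_mul_derivative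
  · have h2 : d⁄dX ℚ (2 : ℚ⟦X⟧) = 0 := by simpa using Derivation.map_natCast (d⁄dX ℚ) 2
    have h4 : d⁄dX ℚ (4 : ℚ⟦X⟧) = 0 := by simpa using Derivation.map_natCast (d⁄dX ℚ) 4
    simp only [Derivation.leibniz, Derivation.leibniz_pow, map_add, derivative_X, smul_eq_mul, hP,
      h2, h4, Derivation.map_one_eq_zero]
    linear_combination 4 * P * (2 + X) * derivative_logRatio_mul
  · rw [map_pow, map_add, constantCoeff_X, map_ofNat]; norm_num
  · rw [map_mul, constantCoeff_subst_of_constantCoeff_eq_zero_s17 constantCoeff_logRatio]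
    norm_num [map_ofNat]

theorem X_mul_ratioB : X * ratioB = 1 - evalNegHom (exp ℚ) := by
  ext n
  rcases n with _ | n
  · rw [coeff_zero_eq_constantCoeff, map_mul, constantCoeff_X, zero_mul, map_sub, map_one,
      evalNegHom, ← coeff_zero_eq_constantCoeff_apply, coeff_rescale, coeff_exp]
    simp
  · rw [coeff_succ_X_mul, map_sub, coeff_one, if_neg n.succ_ne_zero, evalNegHom, coeff_rescale,
      coeff_exp, ratioB, coeff_mk]
    simp [pow_succ, div_eq_mul_inv]

theorem two_mul_subst_logRatio_eq {t w : ℚ⟦X⟧} (ht : (X * t) ^ 2 = denomLog)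
    (ht0 : constantCoeff t = 1) (hw : w ^ 2 = ratioB⁻¹) (hw0 : constantCoeff w = 1) :
    2 * w.subst logRatio = (2 + X) * t := by
  have hsub := HasSubst.of_constantCoeff_zero' constantCoeff_logRatio
  set P : ℚ⟦X⟧ := (exp ℚ).subst logRatio
  set R : ℚ⟦X⟧ := (evalNegHom (exp ℚ)).subst logRatio
  set B : ℚ⟦X⟧ := ratioB.subst logRatio
  set V : ℚ⟦X⟧ := w.subst logRatio
  have hPR : P * R = 1 := by
    rw [← subst_mul hsub, exp_mul_exp_neg_eq_one, ← coe_substAlgHom hsub, map_one]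
  have hB : logRatio * B = 1 - R := by
    rw [← subst_X hsub (R := ℚ), ← subst_mul hsub, X_mul_ratioB, ← coe_substAlgHom hsub, map_sub,
      map_one, coe_substAlgHom]
  have hVB : V ^ 2 * B = 1 := by
    have hB0 : constantCoeff ratioB ≠ 0 := by simp [ratioB, ← coeff_zero_eq_constantCoeff_apply]
    rw [← subst_pow hsub, ← subst_mul hsub, hw, PowerSeries.inv_mul_cancel _ hB0,
      ← coe_substAlgHom hsub, map_one]
  have h4 : C (4⁻¹ : ℚ) * 4 = 1 := by rw [← map_ofNat C 4, ← map_mul]; norm_num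
  have hdef : logRatio = C 4⁻¹ * denomLog := rfl
  have hBt : (2 + X) ^ 2 * t ^ 2 * B = 4 := by
    refine mul_left_cancel₀ (pow_ne_zero 2 X_ne_zero) ?_
    linear_combination (2 + X) ^ 2 * B * ht - denomLog * (2 + X) ^ 2 * B * h4
      - 4 * (2 + X) ^ 2 * B * hdef + 4 * (2 + X) ^ 2 * hB + 4 * R * exp_subst_logRatio_mul
      - 16 * (1 + X) * hPR
  refine eq_of_sq_eq_sq_of_constantCoeff_eq_s17 ?_ ?_ ?_
  · linear_combination (2 + X) ^ 2 * t ^ 2 * hVB - V ^ 2 * hBt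
  · simp [V, constantCoeff_subst_of_constantCoeff_eq_zero_s17 constantCoeff_logRatio, hw0, ht0]
  · simp [V, constantCoeff_subst_of_constantCoeff_eq_zero_s17 constantCoeff_logRatio, hw0, map_ofNat]

theorem mul_derivative_X_mul_of_sq_eq_denomLog {t : ℚ⟦X⟧} (ht : (X * t) ^ 2 = denomLog) :
    t * d⁄dX ℚ (X * t) * ((2 + X) * (1 + X)) = 2 := by
  have hd := congrArg (d⁄dX ℚ) ht
  rw [Derivation.leibniz_pow, nsmul_eq_mul, smul_eq_mul] at hd
  refine mul_left_cancel₀ (mul_ne_zero two_ne_zero X_ne_zero : (2 * X : ℚ⟦X⟧) ≠ 0) ?_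
  linear_combination derivative_denomLog_mul + (2 + X) * (1 + X) * hd

noncomputable def inverseDeriv (w : ℚ⟦X⟧) : ℚ⟦X⟧ :=
  X * (exp ℚ).subst (C 4⁻¹ * X ^ 2 : ℚ⟦X⟧) + ((2 * exp ℚ - 1) * w).subst (C 4⁻¹ * X ^ 2 : ℚ⟦X⟧)

theorem inverseDeriv_subst_mul_derivative {t w : ℚ⟦X⟧} (ht : (X * t) ^ 2 = denomLog)
    (ht0 : constantCoeff t = 1) (hw : w ^ 2 = ratioB⁻¹) (hw0 : constantCoeff w = 1) :
    (inverseDeriv w).subst (X * t) * d⁄dX ℚ (X * t) = 1 := by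
  have hf : HasSubst (X * t) := HasSubst.of_constantCoeff_zero' (by simp)
  have hq : HasSubst (C 4⁻¹ * X ^ 2 : ℚ⟦X⟧) := HasSubst.of_constantCoeff_zero' (by simp)
  have hqf : (C 4⁻¹ * X ^ 2 : ℚ⟦X⟧).subst (X * t) = logRatio := by
    rw [logRatio, ← ht, subst_mul hf, subst_C, subst_pow hf, subst_X hf]
    rfl
  have hℓ := HasSubst.of_constantCoeff_zero' constantCoeff_logRatio
  rw [inverseDeriv, subst_add hf, subst_mul hf, subst_X hf, subst_comp_subst_apply hq hf,
    subst_comp_subst_apply hq hf, hqf, ← coe_substAlgHom hℓ]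
  simp only [map_mul, map_sub, map_one, map_ofNat, coe_substAlgHom]
  have hP := exp_subst_logRatio_mul
  have hV := two_mul_subst_logRatio_eq ht ht0 hw hw0
  have hdf := mul_derivative_X_mul_of_sq_eq_denomLog ht
  set P : ℚ⟦X⟧ := (exp ℚ).subst logRatio
  set V : ℚ⟦X⟧ := w.subst logRatio
  have h1X : (1 + X : ℚ⟦X⟧) ≠ 0 := fun h => by simpa using congrArg constantCoeff h
  refine mul_left_cancel₀ (mul_ne_zero (by norm_num) h1X : (8 * (1 + X) : ℚ⟦X⟧) ≠ 0) ?_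
  linear_combination (2 * X * t * d⁄dX ℚ (X * t) + 4 * V * d⁄dX ℚ (X * t)) * hP
    + (2 * (2 + X) ^ 2 - 4 * (1 + X)) * d⁄dX ℚ (X * t) * hV + 4 * (1 + X) * hdf

/-- Here `Q3 = v²/(4·log((1+v/2)²/(1+v)))` is characterized by `Q3 * denomLog = X ^ 2`, and
`w = (y/(1−e^{−y}))^{1/2}` by `w ^ 2 = ratioB⁻¹` with constant term 1. -/
theorem stmt17 (m : ℕ) (Q3 H w : ℚ⟦X⟧)
    (hQ3 : Q3 * denomLog = X ^ 2)
    (hH : H ^ 2 = Q3 ^ (2 * m + 1)) (hH0 : constantCoeff H = 1)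
    (hw : w ^ 2 = ratioB⁻¹) (hw0 : constantCoeff w = 1) :
    coeff (2 * m) H =
      ((4 : ℚ) ^ m)⁻¹ * coeff m ((2 * PowerSeries.exp ℚ - 1) * w) := by
  obtain ⟨t, ht, ht0⟩ := exists_X_mul_sq_eq_denomLog
  have ht0' : constantCoeff t ≠ 0 := by simp [ht0]
  have hQt : Q3 * t ^ 2 = 1 := by
    refine mul_left_cancel₀ (pow_ne_zero 2 X_ne_zero) ?_
    linear_combination Q3 * ht + hQ3
  have hQ : Q3 = t⁻¹ ^ 2 := by
    linear_combination -Q3 * (t⁻¹ * t + 1) * PowerSeries.inv_mul_cancel t ht0' + t⁻¹ ^ 2 * hQt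
  have hHt : H = t⁻¹ ^ (2 * m + 1) :=
    eq_of_sq_eq_sq_of_constantCoeff_eq_s17 (by rw [hH, hQ, ← pow_mul, ← pow_mul, mul_comm])
      (by simp [hH0, ht0]) (by simp [hH0])
  rw [hHt, coeff_inv_pow_succ_eq_coeff_of_subst_mul_derivative_eq_one ht0'
    (inverseDeriv_subst_mul_derivative ht ht0 hw hw0), inverseDeriv, map_add,
    coeff_subst_C_mul_X_sq, if_pos (dvd_mul_right 2 m), Nat.mul_div_cancel_left m two_pos, inv_pow]
  rcases m with _ | m
  · simp
  · rw [show 2 * (m + 1) = 2 * m + 1 + 1 by ring, coeff_succ_X_mul, coeff_subst_C_mul_X_sq,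
      if_neg (by omega), zero_add]
end
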